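/- Under these hypotheses, the harmonic curvature H = τ/κ of α is constant on I (i.e. α is a general helix) if and only if κ_β(φ(s)) = 0 for all s ∈ I (i.e. the Mannheim partner β is a geodesic, a straight line, along the corresponding points). -/

import Mathlib

open Real RealInnerProductSpace

noncomputable section

/-- Euclidean 3-space. -/
abbrev E3 := EuclideanSpace ℝ (Fin 3)

/-- Cross product on `E3 = EuclideanSpace ℝ (Fin 3)`. -/
def cross3 (x y : E3) : E3 :=
  (EuclideanSpace.equiv (Fin 3) ℝ).symm
    (crossProduct ((EuclideanSpace.equiv (Fin 3) ℝ) x) ((EuclideanSpace.equiv (Fin 3) ℝ) y))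

/-- A unit-speed curve `α : I → E³` together with its Frenet apparatus `(T, N, B, κ, τ)`:
`T = α′`, `κ = ‖T′‖ > 0`, `N = T′/κ`, `B = T × N`, and the Frenet equations
`T′ = κN`, `N′ = −κT + τB`, `B′ = −τN` hold on `I`. -/
structure FrenetCurve (I : Set ℝ) where
  α : ℝ → E3
  T : ℝ → E3
  N : ℝ → E3
  B : ℝ → E3
  κ : ℝ → ℝ
  τ : ℝ → ℝ
  smooth_α : ContDiffOn ℝ (⊤ : ℕ∞) α I
  smooth_T : ContDiffOn ℝ (⊤ : ℕ∞) T I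
  smooth_N : ContDiffOn ℝ (⊤ : ℕ∞) N I
  smooth_B : ContDiffOn ℝ (⊤ : ℕ∞) B I
  smooth_κ : ContDiffOn ℝ (⊤ : ℕ∞) κ I
  smooth_τ : ContDiffOn ℝ (⊤ : ℕ∞) τ I
  /-- `T = α′` -/
  deriv_α : ∀ s ∈ I, HasDerivAt α (T s) s
  /-- unit speed -/
  unit_T : ∀ s ∈ I, ‖T s‖ = 1
  /-- `N` is a unit vector (together with `frenet_T` this says `N = T′/κ`) -/
  unit_N : ∀ s ∈ I, ‖N s‖ = 1
  /-- `κ = ‖T′‖ > 0` -/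
  κ_pos : ∀ s ∈ I, 0 < κ s
  /-- Frenet equation `T′ = κ N` -/
  frenet_T : ∀ s ∈ I, HasDerivAt T (κ s • N s) s
  /-- Frenet equation `N′ = −κ T + τ B` -/
  frenet_N : ∀ s ∈ I, HasDerivAt N (-(κ s) • T s + τ s • B s) s
  /-- Frenet equation `B′ = −τ N` -/
  frenet_B : ∀ s ∈ I, HasDerivAt B (-(τ s) • N s) s
  /-- `B = T × N` -/
  B_def : ∀ s ∈ I, B s = cross3 (T s) (N s)

/-- The harmonic curvature function `H = τ/κ` (Abelian case, where `τ_G = 0`). -/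
def FrenetCurve.H {I : Set ℝ} (c : FrenetCurve I) : ℝ → ℝ := fun s => c.τ s / c.κ s

/-- A unit-speed curve `β : J → E³` equipped with a smooth orthonormal frame `(T, N, B)` and
smooth functions `κ, τ` satisfying the Frenet-type equations (here `κ` is *not* required to be
positive, so geodesics with `κ ≡ 0` are allowed). -/
structure FrameCurve (J : Set ℝ) where
  α : ℝ → E3
  T : ℝ → E3
  N : ℝ → E3
  B : ℝ → E3
  κ : ℝ → ℝ
  τ : ℝ → ℝ
  smooth_α : ContDiffOn ℝ (⊤ : ℕ∞) α J
  smooth_T : ContDiffOn ℝ (⊤ : ℕ∞) T J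
  smooth_N : ContDiffOn ℝ (⊤ : ℕ∞) N J
  smooth_B : ContDiffOn ℝ (⊤ : ℕ∞) B J
  smooth_κ : ContDiffOn ℝ (⊤ : ℕ∞) κ J
  smooth_τ : ContDiffOn ℝ (⊤ : ℕ∞) τ J
  /-- `T = β′` -/
  deriv_α : ∀ s ∈ J, HasDerivAt α (T s) s
  unit_T : ∀ s ∈ J, ‖T s‖ = 1
  unit_N : ∀ s ∈ J, ‖N s‖ = 1
  unit_B : ∀ s ∈ J, ‖B s‖ = 1
  orth_TN : ∀ s ∈ J, ⟪T s, N s⟫ = 0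
  orth_TB : ∀ s ∈ J, ⟪T s, B s⟫ = 0
  orth_NB : ∀ s ∈ J, ⟪N s, B s⟫ = 0
  frenet_T : ∀ s ∈ J, HasDerivAt T (κ s • N s) s
  frenet_N : ∀ s ∈ J, HasDerivAt N (-(κ s) • T s + τ s • B s) s
  frenet_B : ∀ s ∈ J, HasDerivAt B (-(τ s) • N s) s


section Aux
open scoped Matrix

lemma cross3_inner_left (x y : E3) : ⟪x, cross3 x y⟫ = 0 := by
  simp [cross3, cross_apply, PiLp.inner_apply, Fin.sum_univ_three, RCLike.inner_apply,
    EuclideanSpace.equiv]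
  ring

lemma cross3_inner_right (x y : E3) : ⟪y, cross3 x y⟫ = 0 := by
  simp [cross3, cross_apply, PiLp.inner_apply, Fin.sum_univ_three, RCLike.inner_apply,
    EuclideanSpace.equiv]
  ring

lemma cross3_inner_self (x y : E3) : ⟪cross3 x y, cross3 x y⟫ = ⟪x,x⟫ * ⟪y,y⟫ - ⟪x,y⟫ ^ 2 := by
  simp only [cross3, cross_apply, PiLp.inner_apply, Fin.sum_univ_three, RCLike.inner_apply,
    EuclideanSpace.equiv]
  simp [PiLp.inner_apply, Fin.sum_univ_three]
  ring

end Aux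

/-- For a Mannheim couple `(α, β)` (with `β` carrying a Frenet-type frame in
which `κ_β` need not be positive), the harmonic curvature `H = τ/κ` of `α` is constant on `I`
(`α` is a general helix) if and only if `κ_β ∘ φ = 0` on `I` (the Mannheim partner `β` is a
geodesic along the corresponding points). -/
theorem mannheim_general_helix_iff_partner_geodesic
    (I J : Set ℝ) (hI : IsOpen I) (hIconn : I.OrdConnected) (hJ : IsOpen J)
    (a : FrenetCurve I) (b : FrameCurve J)
    (l : ℝ) (φ dφ : ℝ → ℝ) (hφsm : ContDiffOn ℝ (⊤ : ℕ∞) φ I)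
    (hdφ : ∀ s ∈ I, HasDerivAt φ (dφ s) s) (hdφ_pos : ∀ s ∈ I, 0 < dφ s)
    (hmaps : ∀ s ∈ I, φ s ∈ J)
    (hcouple : ∀ s ∈ I, b.α (φ s) = a.α s + l • a.N s)
    (hrel : ∀ s ∈ I, l * a.κ s * (1 + a.H s ^ 2) = 1)
    (hτ : ∀ s ∈ I, a.τ s ≠ 0)
    (hB : ∀ s ∈ I, b.B (φ s) = a.N s) :
    (∃ c : ℝ, ∀ s ∈ I, a.H s = c) ↔ (∀ s ∈ I, b.κ (φ s) = 0) := by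
  -- derivative existence for κ, τ and dφ
  have hk' : ∀ s ∈ I, HasDerivAt a.κ (deriv a.κ s) s := fun s hs =>
    ((a.smooth_κ.contDiffAt (hI.mem_nhds hs)).differentiableAt (by simp)).hasDerivAt
  have ht' : ∀ s ∈ I, HasDerivAt a.τ (deriv a.τ s) s := fun s hs =>
    ((a.smooth_τ.contDiffAt (hI.mem_nhds hs)).differentiableAt (by simp)).hasDerivAt
  have hdφsm : ContDiffOn ℝ (⊤ : ℕ∞) (deriv φ) I := hφsm.deriv_of_isOpen hI (by simp)
  have hd2 : ∀ s ∈ I, HasDerivAt dφ (deriv (deriv φ) s) s := by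
    intro s hs
    have h1 : HasDerivAt (deriv φ) (deriv (deriv φ) s) s :=
      ((hdφsm.contDiffAt (hI.mem_nhds hs)).differentiableAt (by simp)).hasDerivAt
    refine h1.congr_of_eventuallyEq ?_
    filter_upwards [hI.mem_nhds hs] with x hx
    exact ((hdφ x hx).deriv).symm
  -- orthonormality of the Frenet frame of α
  have hTT : ∀ s ∈ I, ⟪a.T s, a.T s⟫ = 1 := fun s hs => by
    rw [real_inner_self_eq_norm_sq, a.unit_T s hs]; norm_num
  have hNN : ∀ s ∈ I, ⟪a.N s, a.N s⟫ = 1 := fun s hs => by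
    rw [real_inner_self_eq_norm_sq, a.unit_N s hs]; norm_num
  have hTN : ∀ s ∈ I, ⟪a.T s, a.N s⟫ = 0 := by
    intro s hs
    have h1 : HasDerivAt (fun t => ⟪a.T t, a.T t⟫)
        (⟪a.T s, a.κ s • a.N s⟫ + ⟪a.κ s • a.N s, a.T s⟫) s :=
      (a.frenet_T s hs).inner ℝ (a.frenet_T s hs)
    have h2 : HasDerivAt (fun t => ⟪a.T t, a.T t⟫) 0 s := by
      refine (hasDerivAt_const s (1:ℝ)).congr_of_eventuallyEq ?_
      filter_upwards [hI.mem_nhds hs] with x hx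
      exact hTT x hx
    have h3 := h1.unique h2
    rw [real_inner_smul_right, real_inner_smul_left, real_inner_comm (a.N s) (a.T s)] at h3
    have hκ := a.κ_pos s hs
    rw [real_inner_comm]
    rcases mul_eq_zero.1 (by linarith : a.κ s * ⟪a.N s, a.T s⟫ = 0) with h | h
    · exact absurd h hκ.ne'
    · exact h
  have hTB : ∀ s ∈ I, ⟪a.T s, a.B s⟫ = 0 := fun s hs => by
    rw [a.B_def s hs]; exact cross3_inner_left _ _
  have hNB : ∀ s ∈ I, ⟪a.N s, a.B s⟫ = 0 := fun s hs => by
    rw [a.B_def s hs]; exact cross3_inner_right _ _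
  have hBB : ∀ s ∈ I, ⟪a.B s, a.B s⟫ = 1 := fun s hs => by
    rw [a.B_def s hs, cross3_inner_self, hTT s hs, hNN s hs, hTN s hs]; norm_num
  -- l ≠ 0
  have hl : ∀ s ∈ I, l ≠ 0 := by
    intro s hs hl0
    have := hrel s hs
    rw [hl0] at this; norm_num at this
  -- the algebraic form of hrel : l * (κ² + τ²) = κ
  have hrel' : ∀ s ∈ I, l * (a.κ s ^ 2 + a.τ s ^ 2) = a.κ s := by
    intro s hs
    have h := hrel s hs
    have hκ := (a.κ_pos s hs).ne'
    unfold FrenetCurve.H at h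
    field_simp at h
    nlinarith [h, a.κ_pos s hs]
  -- E1 : dφ • (T_β ∘ φ) = T + l • N'
  have hE1 : ∀ s ∈ I, dφ s • b.T (φ s)
      = a.T s + l • (-(a.κ s) • a.T s + a.τ s • a.B s) := by
    intro s hs
    have h1 : HasDerivAt (fun t => b.α (φ t)) (dφ s • b.T (φ s)) s :=
      (b.deriv_α (φ s) (hmaps s hs)).scomp s (hdφ s hs)
    have h2 : HasDerivAt (fun t => a.α t + l • a.N t)
        (a.T s + l • (-(a.κ s) • a.T s + a.τ s • a.B s)) s :=
      (a.deriv_α s hs).add ((a.frenet_N s hs).const_smul l)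
    have h3 : HasDerivAt (fun t => b.α (φ t))
        (a.T s + l • (-(a.κ s) • a.T s + a.τ s • a.B s)) s := by
      refine h2.congr_of_eventuallyEq ?_
      filter_upwards [hI.mem_nhds hs] with x hx
      exact hcouple x hx
    exact h1.unique h3
  -- E2 : dφ • (−τ_β) • (N_β ∘ φ) = N' = −κ T + τ B
  have hE2 : ∀ s ∈ I, dφ s • (-(b.τ (φ s)) • b.N (φ s))
      = -(a.κ s) • a.T s + a.τ s • a.B s := by
    intro s hs
    have h1 : HasDerivAt (fun t => b.B (φ t)) (dφ s • (-(b.τ (φ s)) • b.N (φ s))) s :=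
      (b.frenet_B (φ s) (hmaps s hs)).scomp s (hdφ s hs)
    have h2 : HasDerivAt (fun t => b.B (φ t))
        (-(a.κ s) • a.T s + a.τ s • a.B s) s := by
      refine (a.frenet_N s hs).congr_of_eventuallyEq ?_
      filter_upwards [hI.mem_nhds hs] with x hx
      exact hB x hx
    exact h1.unique h2
  -- τ_β ∘ φ ≠ 0
  have hτβ : ∀ s ∈ I, b.τ (φ s) ≠ 0 := by
    intro s hs h0
    have h := hE2 s hs
    rw [h0] at h
    simp only [neg_zero, zero_smul, smul_zero] at h
    have h4 := congrArg (fun v => ⟪v, a.B s⟫) h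
    simp only [inner_add_left, real_inner_smul_left, inner_zero_left] at h4
    rw [hTB s hs, hBB s hs] at h4
    have := hτ s hs
    simp at h4
    exact this h4.symm
  -- main identity : −dφ³ τ_β κ_β = l (κ κ' + τ τ')
  have hmain : ∀ s ∈ I, -(dφ s ^ 3 * b.τ (φ s) * b.κ (φ s))
      = l * (a.κ s * deriv a.κ s + a.τ s * deriv a.τ s) := by
    intro s hs
    set k' := deriv a.κ s with hk'def
    set t' := deriv a.τ s with ht'def
    -- derivative of u = dφ • (T_β ∘ φ)
    have hu1 : HasDerivAt (fun t => dφ t • b.T (φ t))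
        (dφ s • (dφ s • (b.κ (φ s) • b.N (φ s))) + deriv (deriv φ) s • b.T (φ s)) s :=
      (hd2 s hs).smul ((b.frenet_T (φ s) (hmaps s hs)).scomp s (hdφ s hs))
    -- derivative of v = T + l • (−κ T + τ B) computed via the Frenet equations
    have hpart1 : HasDerivAt (fun t => -(a.κ t) • a.T t)
        (-(a.κ s) • (a.κ s • a.N s) + -k' • a.T s) s :=
      ((hk' s hs).neg).smul (a.frenet_T s hs)
    have hpart2 : HasDerivAt (fun t => a.τ t • a.B t)
        (a.τ s • (-(a.τ s) • a.N s) + t' • a.B s) s :=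
      (ht' s hs).smul (a.frenet_B s hs)
    have hv : HasDerivAt (fun t => a.T t + l • (-(a.κ t) • a.T t + a.τ t • a.B t))
        (a.κ s • a.N s + l • ((-(a.κ s) • (a.κ s • a.N s) + -k' • a.T s)
          + (a.τ s • (-(a.τ s) • a.N s) + t' • a.B s))) s :=
      (a.frenet_T s hs).add ((hpart1.add hpart2).const_smul l)
    have hu2 : HasDerivAt (fun t => dφ t • b.T (φ t))
        (a.κ s • a.N s + l • ((-(a.κ s) • (a.κ s • a.N s) + -k' • a.T s)
          + (a.τ s • (-(a.τ s) • a.N s) + t' • a.B s))) s := by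
      refine hv.congr_of_eventuallyEq ?_
      filter_upwards [hI.mem_nhds hs] with x hx
      exact hE1 x hx
    have hVE := hu1.unique hu2
    -- take inner products with P := −κ T + τ B = dφ • (−τ_β) • N_β
    have hNβ : ⟪b.N (φ s), b.N (φ s)⟫ = 1 := by
      rw [real_inner_self_eq_norm_sq, b.unit_N (φ s) (hmaps s hs)]; norm_num
    have hTNβ : ⟪b.T (φ s), b.N (φ s)⟫ = 0 := b.orth_TN (φ s) (hmaps s hs)
    have hNT : ⟪a.N s, a.T s⟫ = 0 := by rw [real_inner_comm]; exact hTN s hs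
    have hBT : ⟪a.B s, a.T s⟫ = 0 := by rw [real_inner_comm]; exact hTB s hs
    have hBN : ⟪a.B s, a.N s⟫ = 0 := by rw [real_inner_comm]; exact hNB s hs
    have hinner := congrArg (fun v => ⟪v, -(a.κ s) • a.T s + a.τ s • a.B s⟫) hVE
    have eqL : ⟪dφ s • dφ s • b.κ (φ s) • b.N (φ s) + deriv (deriv φ) s • b.T (φ s),
        -(a.κ s) • a.T s + a.τ s • a.B s⟫ = -(dφ s ^ 3 * b.τ (φ s) * b.κ (φ s)) := by
      rw [← hE2 s hs]
      simp only [inner_add_left, inner_add_right, real_inner_smul_left, real_inner_smul_right,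
        inner_neg_left, inner_neg_right, hNβ, hTNβ]
      ring
    have eqR : ⟪a.κ s • a.N s + l • ((-(a.κ s) • (a.κ s • a.N s) + -k' • a.T s)
          + (a.τ s • (-(a.τ s) • a.N s) + t' • a.B s)),
        -(a.κ s) • a.T s + a.τ s • a.B s⟫ = l * (a.κ s * k' + a.τ s * t') := by
      simp only [inner_add_left, inner_add_right, real_inner_smul_left, real_inner_smul_right,
        inner_neg_left, inner_neg_right, hTT s hs, hTN s hs, hTB s hs, hNN s hs, hNB s hs,
        hBB s hs, hNT, hBT, hBN]
      ring
    linarith [hinner, eqL, eqR]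
  -- differentiating hrel' : κ' = 2 l (κ κ' + τ τ')
  have hdag : ∀ s ∈ I, deriv a.κ s
      = 2 * l * (a.κ s * deriv a.κ s + a.τ s * deriv a.τ s) := by
    intro s hs
    have h1 : HasDerivAt (fun t => l * (a.κ t ^ 2 + a.τ t ^ 2) - a.κ t)
        (l * (2 * a.κ s ^ 1 * deriv a.κ s + 2 * a.τ s ^ 1 * deriv a.τ s) - deriv a.κ s) s :=
      ((((hk' s hs).pow 2).add ((ht' s hs).pow 2)).const_mul l).sub (hk' s hs)
    have h2 : HasDerivAt (fun t => l * (a.κ t ^ 2 + a.τ t ^ 2) - a.κ t) 0 s := by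
      refine (hasDerivAt_const s (0:ℝ)).congr_of_eventuallyEq ?_
      filter_upwards [hI.mem_nhds hs] with x hx
      rw [hrel' x hx]; ring
    have h3 := h1.unique h2
    simp only [pow_one] at h3
    linarith [h3]
  -- pointwise characterisation
  have hiff : ∀ s ∈ I, (b.κ (φ s) = 0 ↔ (deriv a.κ s = 0 ∧ deriv a.τ s = 0)) := by
    intro s hs
    constructor
    · intro h0
      have hm := hmain s hs
      rw [h0] at hm
      simp only [mul_zero, neg_zero] at hm
      have hsum : a.κ s * deriv a.κ s + a.τ s * deriv a.τ s = 0 := by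
        rcases mul_eq_zero.1 hm.symm with h | h
        · exact absurd h (hl s hs)
        · exact h
      have hk0 : deriv a.κ s = 0 := by
        rw [hdag s hs, hsum]; ring
      refine ⟨hk0, ?_⟩
      have : a.τ s * deriv a.τ s = 0 := by
        rw [hk0] at hsum; linarith
      rcases mul_eq_zero.1 this with h | h
      · exact absurd h (hτ s hs)
      · exact h
    · rintro ⟨hk0, ht0⟩
      have hm := hmain s hs
      rw [hk0, ht0] at hm
      simp only [mul_zero, zero_add, add_zero] at hm
      have : dφ s ^ 3 * b.τ (φ s) * b.κ (φ s) = 0 := by linarith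
      rcases mul_eq_zero.1 this with h | h
      · rcases mul_eq_zero.1 h with h' | h'
        · exact absurd h' (pow_ne_zero 3 (hdφ_pos s hs).ne')
        · exact absurd h' (hτβ s hs)
      · exact h
  constructor
  · rintro ⟨c, hc⟩ s hs
    have hD : l * (1 + c ^ 2) ≠ 0 := by
      intro h0
      have := hrel s hs
      rw [hc s hs] at this
      rw [show l * a.κ s * (1 + c ^ 2) = a.κ s * (l * (1 + c ^ 2)) by ring, h0] at this
      norm_num at this
    have hκconst : ∀ x ∈ I, a.κ x = 1 / (l * (1 + c ^ 2)) := by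
      intro x hx
      have h := hrel x hx
      rw [hc x hx] at h
      rw [eq_div_iff hD]
      linarith [h]
    have hτconst : ∀ x ∈ I, a.τ x = c / (l * (1 + c ^ 2)) := by
      intro x hx
      have hHx : a.τ x / a.κ x = c := hc x hx
      have hκx := (a.κ_pos x hx).ne'
      have : a.τ x = c * a.κ x := by
        field_simp at hHx
        linarith [hHx]
      rw [this, hκconst x hx]; ring
    have hk0 : deriv a.κ s = 0 := by
      have h1 : HasDerivAt a.κ 0 s := by
        refine (hasDerivAt_const s (1 / (l * (1 + c ^ 2)))).congr_of_eventuallyEq ?_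
        filter_upwards [hI.mem_nhds hs] with x hx
        exact hκconst x hx
      exact (hk' s hs).unique h1
    have ht0 : deriv a.τ s = 0 := by
      have h1 : HasDerivAt a.τ 0 s := by
        refine (hasDerivAt_const s (c / (l * (1 + c ^ 2)))).congr_of_eventuallyEq ?_
        filter_upwards [hI.mem_nhds hs] with x hx
        exact hτconst x hx
      exact (ht' s hs).unique h1
    exact (hiff s hs).2 ⟨hk0, ht0⟩
  · intro h0
    rcases Set.eq_empty_or_nonempty I with hIe | ⟨s₀, hs₀⟩
    · exact ⟨0, fun s hs => absurd hs (by rw [hIe]; exact Set.notMem_empty s)⟩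
    refine ⟨a.H s₀, fun s hs => ?_⟩
    have hH0 : ∀ x ∈ I, HasDerivAt a.H 0 x := by
      intro x hx
      obtain ⟨hk0, ht0⟩ := (hiff x hx).1 (h0 x hx)
      have hκx := (a.κ_pos x hx).ne'
      have h1 : HasDerivAt (fun t => a.τ t / a.κ t)
          ((deriv a.τ x * a.κ x - a.τ x * deriv a.κ x) / a.κ x ^ 2) x :=
        (ht' x hx).div (hk' x hx) hκx
      rw [hk0, ht0] at h1
      exact (by simpa using h1 : HasDerivAt (fun t => a.τ t / a.κ t) 0 x)
    rcases le_total s₀ s with hle | hle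
    · have hsub : Set.Icc s₀ s ⊆ I := hIconn.out hs₀ hs
      have := constant_of_has_deriv_right_zero (f := a.H) (a := s₀) (b := s)
        (fun x hx => ((hH0 x (hsub hx)).continuousAt).continuousWithinAt)
        (fun x hx => (hH0 x (hsub ⟨hx.1, hx.2.le⟩)).hasDerivWithinAt)
      exact this s (Set.right_mem_Icc.2 hle)
    · have hsub : Set.Icc s s₀ ⊆ I := hIconn.out hs hs₀
      have := constant_of_has_deriv_right_zero (f := a.H) (a := s) (b := s₀)
        (fun x hx => ((hH0 x (hsub hx)).continuousAt).continuousWithinAt)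
        (fun x hx => (hH0 x (hsub ⟨hx.1, hx.2.le⟩)).hasDerivWithinAt)
      exact (this s₀ (Set.right_mem_Icc.2 hle)).symm
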